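/- Let M be a countable connected 2-level poset that is 2-CS-transitive and 3-CS-transitive, and suppose that for all a ∈ Min(M) and b ∈ Max(M) with a < b the interval [a,b]^{M^D} is finite. If b, c ∈ Max(M) are distinct and have a common lower bound, then their infimum y = b ∧ c exists in M^D and is covered by both b and c in M^D (i.e. y < b with no element of M^D strictly between, and likewise y < c). Conversely, if b, c ∈ Max(M) are distinct and both cover some element y of M^D, then y = b ∧ c. -/

import Mathlib

set_option autoImplicit false

section Preamble

/-- A *cut* of a poset `M`: a nonempty subset, bounded above, which equals the set of
lower bounds of its set of upper bounds. -/
def IsCut {M : Type*} [PartialOrder M] (J : Set M) : Prop :=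
  J.Nonempty ∧ (upperBounds J).Nonempty ∧ lowerBounds (upperBounds J) = J

/-- The Dedekind–MacNeille completion of `M`: the set of cuts, ordered by inclusion. -/
abbrev DMC (M : Type*) [PartialOrder M] : Type _ := {J : Set M // IsCut J}

/-- The canonical embedding of `M` into `DMC M`, `a ↦ {x | x ≤ a}`. -/
def principalCut {M : Type*} [PartialOrder M] (a : M) : DMC M :=
  ⟨Set.Iic a, ⟨a, le_refl a⟩, ⟨a, fun _ hx => hx⟩, by
    apply Set.Subset.antisymm
    · intro x hx
      exact hx (fun _ hy => hy)
    · exact subset_lowerBounds_upperBounds _⟩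

/-- The image of `M` in its Dedekind–MacNeille completion (the principal cuts). -/
def principalSet (M : Type*) [PartialOrder M] : Set (DMC M) :=
  Set.range (fun a : M => principalCut a)

/-- A 2-level poset: every element is minimal or maximal. -/
def IsTwoLevel (M : Type*) [PartialOrder M] : Prop :=
  ∀ x : M, IsMin x ∨ IsMax x

/-- The set `Min(M)` of minimal elements. -/
def minSet (M : Type*) [PartialOrder M] : Set M := {x | IsMin x}

/-- The set `Max(M)` of maximal elements. -/
def maxSet (M : Type*) [PartialOrder M] : Set M := {x | IsMax x}

/-- The comparability graph of a poset: `x` adjacent to `y` iff `x < y` or `y < x`. -/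
def compGraph (M : Type*) [PartialOrder M] : SimpleGraph M where
  Adj x y := x < y ∨ y < x
  symm := ⟨fun _ _ h => Or.symm h⟩
  loopless := ⟨fun x h => by rcases h with h | h <;> exact lt_irrefl x h⟩

/-- Upward ramification points of `M`: infima in `DMC M` of two incomparable elements of `M`. -/
def upRam (M : Type*) [PartialOrder M] : Set (DMC M) :=
  {p | ∃ a b : M, ¬ a ≤ b ∧ ¬ b ≤ a ∧ IsGLB {principalCut a, principalCut b} p}

/-- Downward ramification points of `M`: suprema in `DMC M` of two incomparable elements of `M`. -/
def downRam (M : Type*) [PartialOrder M] : Set (DMC M) :=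
  {p | ∃ a b : M, ¬ a ≤ b ∧ ¬ b ≤ a ∧ IsLUB {principalCut a, principalCut b} p}

/-- `M⁺ = M ∪ Ram(M)`, as a subset of `DMC M`. -/
def MPlus (M : Type*) [PartialOrder M] : Set (DMC M) :=
  principalSet M ∪ upRam M ∪ downRam M

/-- A 2-arc in a graph. -/
def IsTwoArc {V : Type*} (G : SimpleGraph V) (v₀ v₁ v₂ : V) : Prop :=
  G.Adj v₀ v₁ ∧ G.Adj v₁ v₂ ∧ v₀ ≠ v₂

/-- Local 1-arc-transitivity: every vertex stabilizer is transitive on neighbours. -/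
def LocallyOneArcTransitive {V : Type*} (G : SimpleGraph V) : Prop :=
  ∀ v u w : V, G.Adj v u → G.Adj v w → ∃ g : G ≃g G, g v = v ∧ g u = w

/-- Local 2-arc-transitivity: every vertex stabilizer is transitive on 2-arcs from that vertex. -/
def LocallyTwoArcTransitive {V : Type*} (G : SimpleGraph V) : Prop :=
  ∀ v u₁ w₁ u₂ w₂ : V, IsTwoArc G v u₁ w₁ → IsTwoArc G v u₂ w₂ →
    ∃ g : G ≃g G, g v = v ∧ g u₁ = u₂ ∧ g w₁ = w₂

/-- (Global) 1-arc-transitivity of a graph. -/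
def OneArcTransitive {V : Type*} (G : SimpleGraph V) : Prop :=
  ∀ v₀ v₁ u₀ u₁ : V, G.Adj v₀ v₁ → G.Adj u₀ u₁ →
    ∃ g : G ≃g G, g v₀ = u₀ ∧ g v₁ = u₁

/-- (Global) 2-arc-transitivity of a graph. -/
def TwoArcTransitive {V : Type*} (G : SimpleGraph V) : Prop :=
  ∀ v₀ v₁ v₂ u₀ u₁ u₂ : V, IsTwoArc G v₀ v₁ v₂ → IsTwoArc G u₀ u₁ u₂ →
    ∃ g : G ≃g G, g v₀ = u₀ ∧ g v₁ = u₁ ∧ g v₂ = u₂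

/-- 3-CS-homogeneity: every isomorphism between connected 3-element induced subposets
extends to an automorphism. -/
def ThreeCSHomogeneous (M : Type*) [PartialOrder M] : Prop :=
  ∀ A B : Set M, A.ncard = 3 → B.ncard = 3 →
    ((compGraph M).induce A).Connected → ((compGraph M).induce B).Connected →
    ∀ f : ↥A ≃o ↥B, ∃ g : M ≃o M, ∀ a : ↥A, g ↑a = ↑(f a)

/-- 2-CS-transitivity: the automorphism group is transitive on comparable pairs. -/
def TwoCSTransitive (M : Type*) [PartialOrder M] : Prop :=
  ∀ a b a' b' : M, a < b → a' < b' → ∃ g : M ≃o M, g a = a' ∧ g b = b'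

/-- 3-CS-transitivity: for any two isomorphic connected 3-element induced subposets there
is an automorphism carrying one onto the other. -/
def ThreeCSTransitive (M : Type*) [PartialOrder M] : Prop :=
  ∀ A B : Set M, A.ncard = 3 → B.ncard = 3 →
    ((compGraph M).induce A).Connected → ((compGraph M).induce B).Connected →
    Nonempty (↥A ≃o ↥B) → ∃ g : M ≃o M, ⇑g '' A = B

/-- A subset of a poset is a `k`-diamond if it consists of a least element, a greatest
element, and exactly `k` pairwise incomparable elements strictly in between. -/
def IsKDiamond {P : Type*} [PartialOrder P] (s : Set P) (k : ℕ) : Prop :=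
  ∃ a b : P, a ∈ s ∧ b ∈ s ∧ a ≠ b ∧ (∀ z ∈ s, a ≤ z ∧ z ≤ b) ∧
    (s \ {a, b}).ncard = k ∧
    ∀ z ∈ s \ ({a, b} : Set P), ∀ w ∈ s \ ({a, b} : Set P), z ≠ w → ¬ z ≤ w

end Preamble

/-!
Let `y = b ∧ c` be the cut of common lower bounds of `b` and `c`, and pick `a < b, c`. If a cut
`K` lay strictly between `y` and `b`, then some maximal `d ≠ b` would bound `K` above, so
`y < b ∧ d ≤ b`. By 3-CS-transitivity an automorphism fixes `a` and carries the V-shaped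
subposet `{a, b, c}` onto `{a, b, d}`, hence `y` onto `b ∧ d`; it then maps the finite interval
`[a, y]` of the completion onto the strictly larger interval `[a, b ∧ d] ⊆ [a, b]`, which is
impossible. The converse holds because `b ∧ c` lies strictly below `b` and above `y`.
-/

open Set

theorem OrderIso.not_lt_apply_of_finite_Icc {P : Type*} [PartialOrder P] (e : P ≃o P)
    {p y : P} (hp : e p = p) (hpy : p ≤ y) (hfin : (Icc p (e y)).Finite) : ¬ y < e y := by
  intro hlt
  have hcard : (Icc p (e y)).ncard = (Icc p y).ncard := by
    rw [← ncard_image_of_injective (Icc p y) e.injective, e.image_Icc, hp]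
  have heq := eq_of_subset_of_ncard_le (Icc_subset_Icc_right hlt.le) hcard.le hfin
  exact hlt.not_ge (heq ▸ right_mem_Icc.2 (hpy.trans hlt.le) : e y ∈ Icc p y).2

theorem CovBy.eq_of_isGLB {P : Type*} [PartialOrder P] {y p q z : P} (hyp : y ⋖ p)
    (hyq : y ≤ q) (hz : IsGLB {p, q} z) (hpq : ¬ p ≤ q) : y = z := by
  have hyz : y ≤ z := hz.2 (by simp [hyp.le, hyq])
  have hzp : z < p := (hz.1 (mem_insert p {q})).lt_of_ne fun e =>
    hpq (e ▸ hz.1 (mem_insert_of_mem p rfl))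
  exact hyz.eq_of_not_lt fun hlt => hyp.2 hlt hzp

section

variable {M : Type*} [PartialOrder M]

theorem IsTwoLevel.isMin_of_lt (h : IsTwoLevel M) {a b : M} (hab : a < b) : IsMin a :=
  (h a).resolve_right fun ha => ha.not_lt hab

theorem IsTwoLevel.isMax_of_lt (h : IsTwoLevel M) {a b : M} (hab : a < b) : IsMax b :=
  (h b).resolve_left fun hb => hb.not_lt hab

theorem IsMax.not_le_of_ne {b c : M} (hb : IsMax b) (hbc : b ≠ c) : ¬ b ≤ c :=
  fun h => hbc (hb.eq_of_le h)

section Vee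

def IsVee (a b c : M) : Prop := a < b ∧ a < c ∧ ¬ b ≤ c ∧ ¬ c ≤ b

variable {a b c d : M}

theorem isVee_of_isMax (hb : IsMax b) (hc : IsMax c) (hbc : b ≠ c) (hab : a < b)
    (hac : a < c) : IsVee a b c :=
  ⟨hab, hac, hb.not_le_of_ne hbc, hc.not_le_of_ne hbc.symm⟩

namespace IsVee

variable (h : IsVee a b c)
include h

theorem ncard_eq_three : ({a, b, c} : Set M).ncard = 3 :=
  Set.ncard_eq_three.2 ⟨a, b, c, h.1.ne, h.2.1.ne, fun hbc => h.2.2.1 hbc.le, rfl⟩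

theorem connected_induce : ((compGraph M).induce ({a, b, c} : Set M)).Connected := by
  have : Nonempty ({a, b, c} : Set M) := ⟨⟨a, by simp⟩⟩
  have hreach : ∀ x : ({a, b, c} : Set M),
      ((compGraph M).induce ({a, b, c} : Set M)).Reachable x ⟨a, by simp⟩ := by
    rintro ⟨x, hx | hx | hx⟩
    · cases hx; rfl
    · cases hx; exact SimpleGraph.Adj.reachable (Or.inr h.1)
    · cases (mem_singleton_iff.1 hx); exact SimpleGraph.Adj.reachable (Or.inr h.2.1)
  exact ⟨fun x y => (hreach x).trans (hreach y).symm⟩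

theorem le_iff {x y : M} (hx : x ∈ ({a, b, c} : Set M)) (hy : y ∈ ({a, b, c} : Set M)) :
    x ≤ y ↔ x = y ∨ x = a := by
  obtain ⟨hab, hac, hbc, hcb⟩ := h
  have hbc' : b ≠ c := fun e => hbc e.le
  simp only [mem_insert_iff, mem_singleton_iff] at hx hy
  rcases hx with rfl | rfl | rfl <;> rcases hy with rfl | rfl | rfl <;>
    simp [hab.le, hac.le, hab.not_ge, hac.not_ge, hbc, hcb, hab.ne', hac.ne', hbc', hbc'.symm]

theorem eq_of_lt {x y : M} (hx : x ∈ ({a, b, c} : Set M)) (hy : y ∈ ({a, b, c} : Set M))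
    (hxy : x < y) : x = a :=
  ((h.le_iff hx hy).1 hxy.le).resolve_left hxy.ne

open Classical in
theorem nonempty_orderIso (h' : IsVee a b d) :
    Nonempty (({a, b, c} : Set M) ≃o ({a, b, d} : Set M)) := by
  have hswap : Equiv.swap c d '' {a, b, c} = {a, b, d} := by
    rw [image_insert_eq, image_insert_eq, image_singleton, Equiv.swap_apply_left,
      Equiv.swap_apply_of_ne_of_ne h.2.1.ne h'.2.1.ne,
      Equiv.swap_apply_of_ne_of_ne (fun e => h.2.2.1 e.le) (fun e => h'.2.2.1 e.le)]
  have hfix : ∀ x, Equiv.swap c d x = a ↔ x = a := fun x => by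
    rw [← Equiv.eq_symm_apply, Equiv.symm_swap,
      Equiv.swap_apply_of_ne_of_ne h.2.1.ne h'.2.1.ne]
  refine ⟨⟨((Equiv.swap c d).image _).trans (Equiv.setCongr hswap), fun {x y} => ?_⟩⟩
  change Equiv.swap c d x ≤ Equiv.swap c d y ↔ (x : M) ≤ y
  rw [h'.le_iff (hswap ▸ mem_image_of_mem _ x.2) (hswap ▸ mem_image_of_mem _ y.2),
    h.le_iff x.2 y.2, (Equiv.swap c d).apply_eq_iff_eq, hfix]

end IsVee

theorem ThreeCSTransitive.exists_fix_image_pair (h3cs : ThreeCSTransitive M)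
    (h : IsVee a b c) (h' : IsVee a b d) :
    ∃ g : M ≃o M, g a = a ∧ ⇑g '' {b, c} = {b, d} := by
  obtain ⟨g, hg⟩ := h3cs _ _ h.ncard_eq_three h'.ncard_eq_three h.connected_induce
    h'.connected_induce (h.nonempty_orderIso h')
  have hmaps : ∀ x ∈ ({a, b, c} : Set M), g x ∈ ({a, b, d} : Set M) :=
    fun x hx => hg ▸ mem_image_of_mem g hx
  -- only the bottom of a V lies strictly below another of its points
  have hga : g a = a :=
    h'.eq_of_lt (hmaps a (by simp)) (hmaps b (by simp)) (g.lt_iff_lt.2 h.1)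
  refine ⟨g, hga, ?_⟩
  have hsdiff : ∀ {x y z : M}, x ≠ y → x ≠ z → ({x, y, z} : Set M) \ {x} = {y, z} :=
    fun hxy hxz => insert_sdiff_self_of_notMem (by simp [hxy, hxz])
  rw [← hsdiff h.1.ne h.2.1.ne, image_sdiff g.injective, hg, image_singleton, hga,
    hsdiff h'.1.ne h'.2.1.ne]

end Vee

section Completion

theorem DMC.le_iff_subset {x y : DMC M} : x ≤ y ↔ x.val ⊆ y.val := Iff.rfl

theorem principalCut_le_principalCut {a b : M} : principalCut a ≤ principalCut b ↔ a ≤ b :=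
  Iic_subset_Iic

theorem isCut_lowerBounds {s : Set M} (hs : s.Nonempty) (hl : (lowerBounds s).Nonempty) :
    IsCut (lowerBounds s) :=
  ⟨hl, hs.mono (subset_upperBounds_lowerBounds s),
    (lowerBounds_mono_set (subset_upperBounds_lowerBounds s)).antisymm
      (subset_lowerBounds_upperBounds _)⟩

def meetCut (b c : M) (h : (lowerBounds {b, c}).Nonempty) : DMC M :=
  ⟨lowerBounds {b, c}, isCut_lowerBounds (insert_nonempty b {c}) h⟩

theorem lowerBounds_pair_nonempty {a b c : M} (hab : a ≤ b) (hac : a ≤ c) :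
    (lowerBounds {b, c}).Nonempty :=
  ⟨a, by simp [lowerBounds_insert, hab, hac]⟩

theorem le_meetCut_iff {b c : M} {h : (lowerBounds {b, c}).Nonempty} {w : DMC M} :
    w ≤ meetCut b c h ↔ w ≤ principalCut b ∧ w ≤ principalCut c := by
  simp only [DMC.le_iff_subset, meetCut, principalCut, lowerBounds_insert, lowerBounds_singleton,
    subset_inter_iff]

theorem isGLB_meetCut {b c : M} (h : (lowerBounds {b, c}).Nonempty) :
    IsGLB {principalCut b, principalCut c} (meetCut b c h) :=
  isGLB_iff_le_iff.2 fun w => by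
    rw [le_meetCut_iff, lowerBounds_insert, lowerBounds_singleton]
    rfl

theorem meetCut_comm {b c : M} (h : (lowerBounds {b, c}).Nonempty) :
    meetCut c b (pair_comm b c ▸ h) = meetCut b c h :=
  Subtype.ext (congrArg lowerBounds (pair_comm c b))

theorem meetCut_lt_left {b c : M} {h : (lowerBounds {b, c}).Nonempty} (hbc : ¬ b ≤ c) :
    meetCut b c h < principalCut b :=
  (le_meetCut_iff.1 le_rfl).1.lt_of_ne fun e =>
    hbc (principalCut_le_principalCut.1 (e ▸ (le_meetCut_iff.1 le_rfl).2))

theorem DMC.exists_not_le_of_lt_principalCut {K : DMC M} {b : M} (h : K < principalCut b) :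
    ∃ d, ¬ b ≤ d ∧ K ≤ principalCut d := by
  obtain ⟨z, hzb, hzK⟩ := exists_of_ssubset (Subtype.coe_lt_coe.2 h)
  rw [← K.prop.2.2, mem_lowerBounds] at hzK
  push Not at hzK
  obtain ⟨d, hd, hzd⟩ := hzK
  exact ⟨d, fun hbd => hzd ((hzb : z ≤ b).trans hbd), fun x hx => hd hx⟩

def DMC.mapIso (g : M ≃o M) : DMC M ≃o DMC M where
  toFun J := ⟨⇑g '' J.val, by
    obtain ⟨hne, hub, hcut⟩ := J.prop
    refine ⟨hne.image g, ?_, ?_⟩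
    · rw [g.upperBounds_image]
      exact hub.image g
    · rw [g.upperBounds_image, g.lowerBounds_image, hcut]⟩
  invFun J := ⟨⇑g.symm '' J.val, by
    obtain ⟨hne, hub, hcut⟩ := J.prop
    refine ⟨hne.image g.symm, ?_, ?_⟩
    · rw [g.symm.upperBounds_image]
      exact hub.image g.symm
    · rw [g.symm.upperBounds_image, g.symm.lowerBounds_image, hcut]⟩
  left_inv J := Subtype.ext (by simp [image_image])
  right_inv J := Subtype.ext (by simp [image_image])
  map_rel_iff' := image_subset_image_iff g.injective

theorem DMC.mapIso_principalCut (g : M ≃o M) (a : M) :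
    DMC.mapIso g (principalCut a) = principalCut (g a) :=
  Subtype.ext (g.image_Iic a)

theorem DMC.mapIso_meetCut (g : M ≃o M) {b c b' c' : M} (hg : ⇑g '' {b, c} = {b', c'})
    (h : (lowerBounds {b, c}).Nonempty) (h' : (lowerBounds {b', c'}).Nonempty) :
    DMC.mapIso g (meetCut b c h) = meetCut b' c' h' :=
  Subtype.ext (show ⇑g '' lowerBounds {b, c} = lowerBounds {b', c'} by
    rw [← hg, g.lowerBounds_image])

end Completion

theorem meetCut_covBy_principalCut (h2lev : IsTwoLevel M) (h3cs : ThreeCSTransitive M) {a b c : M}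
    (hb : IsMax b) (hc : IsMax c) (hbc : b ≠ c) (hab : a < b) (hac : a < c)
    (hfin : (Icc (principalCut a) (principalCut b)).Finite) :
    meetCut b c (lowerBounds_pair_nonempty hab.le hac.le) ⋖ principalCut b := by
  set y := meetCut b c (lowerBounds_pair_nonempty hab.le hac.le)
  have hay : principalCut a ≤ y := le_meetCut_iff.2
    ⟨principalCut_le_principalCut.2 hab.le, principalCut_le_principalCut.2 hac.le⟩
  refine ⟨meetCut_lt_left (hb.not_le_of_ne hbc), fun K hyK hKb => ?_⟩
  obtain ⟨d, hbd, hKd⟩ := DMC.exists_not_le_of_lt_principalCut hKb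
  have had_le : a ≤ d := principalCut_le_principalCut.1 (hay.trans (hyK.le.trans hKd))
  have hbd' : (lowerBounds {b, d}).Nonempty := lowerBounds_pair_nonempty hab.le had_le
  have hyy' : y < meetCut b d hbd' := hyK.trans_le (le_meetCut_iff.2 ⟨hKb.le, hKd⟩)
  have had : a < d := had_le.lt_of_ne <| by
    rintro rfl
    exact (hyy'.trans_le ((le_meetCut_iff.1 le_rfl).2.trans hay)).false
  have hd : IsMax d := h2lev.isMax_of_lt had
  have hdb : d ≠ b := fun e => hbd (e ▸ le_rfl)
  obtain ⟨g, hga, hg⟩ := h3cs.exists_fix_image_pair (isVee_of_isMax hb hc hbc hab hac)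
    (isVee_of_isMax hb hd hdb.symm hab had)
  have hgy : DMC.mapIso g y = meetCut b d hbd' := DMC.mapIso_meetCut g hg _ _
  refine (DMC.mapIso g).not_lt_apply_of_finite_Icc (by rw [DMC.mapIso_principalCut, hga]) hay
    (hfin.subset (Icc_subset_Icc_right ?_)) (hgy ▸ hyy')
  exact hgy ▸ (le_meetCut_iff.1 le_rfl).1

end

theorem meet_of_maximals_covered_general (M : Type*) [PartialOrder M]
    (h2lev : IsTwoLevel M)
    (h3cs : ThreeCSTransitive M)
    (hfin : ∀ a b : M, a ∈ minSet M → b ∈ maxSet M → a < b →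
      (Set.Icc (principalCut a) (principalCut b)).Finite) :
    (∀ b c : M, b ∈ maxSet M → c ∈ maxSet M → b ≠ c → (∃ a : M, a ≤ b ∧ a ≤ c) →
      ∃ y : DMC M, IsGLB {principalCut b, principalCut c} y ∧
        y ⋖ principalCut b ∧ y ⋖ principalCut c) ∧
    (∀ b c : M, b ∈ maxSet M → c ∈ maxSet M → b ≠ c → ∀ y : DMC M,
      y ⋖ principalCut b → y ⋖ principalCut c →
      IsGLB {principalCut b, principalCut c} y) := by
  constructor
  · rintro b c hb hc hbc ⟨a, hab, hac⟩
    have hab : a < b := hab.lt_of_ne fun e => hb.not_le_of_ne hbc (e ▸ hac)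
    have hac : a < c := hac.lt_of_ne fun e => hc.not_le_of_ne hbc.symm (e ▸ hab.le)
    have ha : IsMin a := h2lev.isMin_of_lt hab
    refine ⟨_, isGLB_meetCut _, meetCut_covBy_principalCut h2lev h3cs hb hc hbc hab hac (hfin a b ha hb hab),
      ?_⟩
    rw [← meetCut_comm]
    exact meetCut_covBy_principalCut h2lev h3cs hc hb hbc.symm hac hab (hfin a c ha hc hac)
  · intro b c hb _ hbc y hyb hyc
    obtain ⟨w, hw⟩ := y.prop.1
    have hne := lowerBounds_pair_nonempty (hyb.le hw) (hyc.le hw)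
    rw [hyb.eq_of_isGLB hyc.le (isGLB_meetCut hne)
      (principalCut_le_principalCut.not.2 (hb.not_le_of_ne hbc))]
    exact isGLB_meetCut hne

/-- Lemma 4.2. In a countable connected 2- and 3-CS-transitive 2-level
poset with finite completion intervals, the meet of two distinct maximal elements with a
common lower bound is covered by both of them; conversely an element covered by two distinct
maximal elements is their meet. -/
theorem meet_of_maximals_covered (M : Type*) [PartialOrder M] [Countable M]
    (h2lev : IsTwoLevel M)
    (hconn : (compGraph M).Connected)
    (h2cs : TwoCSTransitive M) (h3cs : ThreeCSTransitive M)
    (hfin : ∀ a b : M, a ∈ minSet M → b ∈ maxSet M → a < b →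
      (Set.Icc (principalCut a) (principalCut b)).Finite) :
    (∀ b c : M, b ∈ maxSet M → c ∈ maxSet M → b ≠ c → (∃ a : M, a ≤ b ∧ a ≤ c) →
      ∃ y : DMC M, IsGLB {principalCut b, principalCut c} y ∧
        y ⋖ principalCut b ∧ y ⋖ principalCut c) ∧
    (∀ b c : M, b ∈ maxSet M → c ∈ maxSet M → b ≠ c → ∀ y : DMC M,
      y ⋖ principalCut b → y ⋖ principalCut c →
      IsGLB {principalCut b, principalCut c} y) :=
  meet_of_maximals_covered_general M h2lev h3cs hfin
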